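/- arXiv:2310.14048 — 2 statements merged into one kernel-verified Lean document; each statement's English description precedes it below -/
import Mathlib

section
/- Let $n\in\mathbb{N}$ and let $D\in\mathbb{C}^{n\times n}$, $E\in\mathbb{C}^{n\times n}$, and $v\in\mathbb{C}^n$ (no assumption on $v$). Define $D_\alpha := \sum_\beta D_{\alpha\beta}\overline{v_\beta}$ and $E_\alpha := \sum_\beta E_{\alpha\beta} v_\beta$. Then $\sum_{\alpha,\beta,\gamma}\big|D_{\alpha\beta}\overline{v_\gamma} + E_{\alpha\gamma} v_\beta\big|^2 = |D|^2|v|^2 + 2\,\mathrm{Re}\sum_\alpha D_\alpha \overline{E_\alpha} + |E|^2|v|^2$, where $|D|^2 = \sum_{\alpha,\beta}|D_{\alpha\beta}|^2$. Consequently, if $|v|\ge 1$ then $\sum_{\alpha,\beta,\gamma}\big|D_{\alpha\beta}\overline{v_\gamma} + E_{\alpha\gamma} v_\beta\big|^2 \ge \sum_\alpha |D_\alpha + E_\alpha|^2$. Moreover, without the assumption $|v|\ge 1$, one still has $\sum_{\alpha,\beta,\gamma}\big|D_{\alpha\beta}\overline{v_\gamma} + E_{\alpha\gamma} v_\beta\big|^2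 \ge \sum_\alpha|D_\alpha+E_\alpha|^2$, since $\sum_\alpha|D_\alpha|^2 \le |D|^2|v|^2$ and $\sum_\alpha|E_\alpha|^2\le |E|^2|v|^2$ by Cauchy–Schwarz. -/
open Finset in
/-- `D_α = Σ_β D_{αβ} conj(v_β)`. -/
noncomputable def TD (n : ℕ) (D : Matrix (Fin n) (Fin n) ℂ) (v : Fin n → ℂ) (α : Fin n) : ℂ :=
  ∑ β, D α β * (starRingEnd ℂ) (v β)

open Finset in
/-- `E_α = Σ_β E_{αβ} v_β`. -/
noncomputable def TE (n : ℕ) (E : Matrix (Fin n) (Fin n) ℂ) (v : Fin n → ℂ) (α : Fin n) : ℂ :=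
  ∑ β, E α β * v β

open Finset Complex in
lemma key_id (n : ℕ) (D E : Matrix (Fin n) (Fin n) ℂ) (v : Fin n → ℂ) (α : Fin n) :
    ∑ β, ∑ γ, ‖D α β * (starRingEnd ℂ) (v γ) + E α γ * v β‖ ^ 2 =
      (∑ β, ‖D α β‖ ^ 2) * (∑ γ, ‖v γ‖ ^ 2) +
        2 * (TD n D v α * (starRingEnd ℂ) (TE n E v α)).re +
        (∑ β, ‖E α β‖ ^ 2) * (∑ γ, ‖v γ‖ ^ 2) := by
  have cross : ∑ β, ∑ γ, (D α β * (starRingEnd ℂ) (v γ) * (starRingEnd ℂ) (E α γ * v β)).re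
      = (TD n D v α * (starRingEnd ℂ) (TE n E v α)).re := by
    rw [TD, TE, map_sum, Finset.sum_mul_sum, Complex.re_sum]
    congr 1; ext β
    rw [Complex.re_sum]
    congr 1; ext γ
    congr 1
    simp only [map_mul]
    ring
  calc ∑ β, ∑ γ, ‖D α β * (starRingEnd ℂ) (v γ) + E α γ * v β‖ ^ 2
      = ∑ β, ∑ γ, (‖D α β‖ ^ 2 * ‖v γ‖ ^ 2
          + ‖E α γ‖ ^ 2 * ‖v β‖ ^ 2
          + 2 * (D α β * (starRingEnd ℂ) (v γ) * (starRingEnd ℂ) (E α γ * v β)).re) := by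
        congr 1; ext β; congr 1; ext γ
        rw [Complex.sq_norm, Complex.normSq_add, ← Complex.sq_norm, ← Complex.sq_norm]
        rw [norm_mul, norm_mul, Complex.norm_conj]
        ring
    _ = (∑ β, ‖D α β‖ ^ 2) * (∑ γ, ‖v γ‖ ^ 2) +
        2 * (TD n D v α * (starRingEnd ℂ) (TE n E v α)).re +
        (∑ β, ‖E α β‖ ^ 2) * (∑ γ, ‖v γ‖ ^ 2) := by
        rw [← cross]
        have h1 : ∑ β, ∑ γ, ‖D α β‖ ^ 2 * ‖v γ‖ ^ 2
            = (∑ β, ‖D α β‖ ^ 2) * (∑ γ, ‖v γ‖ ^ 2) := by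
          rw [Finset.sum_mul_sum]
        have h2 : ∑ β, ∑ γ, ‖E α γ‖ ^ 2 * ‖v β‖ ^ 2
            = (∑ β, ‖E α β‖ ^ 2) * (∑ γ, ‖v γ‖ ^ 2) := by
          rw [Finset.sum_comm, Finset.sum_mul_sum]
        have h3 : ∑ β, ∑ γ, 2 * (D α β * (starRingEnd ℂ) (v γ) * (starRingEnd ℂ) (E α γ * v β)).re
            = 2 * ∑ β, ∑ γ, (D α β * (starRingEnd ℂ) (v γ) * (starRingEnd ℂ) (E α γ * v β)).re := by
          simp only [← Finset.mul_sum]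
        simp only [Finset.sum_add_distrib, h1, h2, h3]
        ring

open Finset Complex in
lemma cs_row (n : ℕ) (M : Matrix (Fin n) (Fin n) ℂ) (w : Fin n → ℂ) (α : Fin n) :
    ‖∑ β, M α β * w β‖ ^ 2 ≤
      (∑ β, ‖M α β‖ ^ 2) * (∑ β, ‖w β‖ ^ 2) := by
  calc ‖∑ β, M α β * w β‖ ^ 2
      ≤ (∑ β, ‖M α β * w β‖) ^ 2 := by
        apply pow_le_pow_left₀ (norm_nonneg _)
        exact norm_sum_le _ _
    _ = (∑ β, ‖M α β‖ * ‖w β‖) ^ 2 := by simp [map_mul]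
    _ ≤ (∑ β, ‖M α β‖ ^ 2) * (∑ β, ‖w β‖ ^ 2) :=
        Finset.sum_mul_sq_le_sq_mul_sq _ _ _


open Finset in
/-- the algebraic identity and inequalities for the tensor
`D_{αβ} conj(v_γ) + E_{αγ} v_β` (Lemma 2, display (2.3) of Flynn–Vétois). -/
theorem stmt5 (n : ℕ) (D E : Matrix (Fin n) (Fin n) ℂ) (v : Fin n → ℂ) :
    (∑ α, ∑ β, ∑ γ, ‖D α β * (starRingEnd ℂ) (v γ) + E α γ * v β‖ ^ 2 =
      (∑ α, ∑ β, ‖D α β‖ ^ 2) * (∑ γ, ‖v γ‖ ^ 2) +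
        2 * (∑ α, TD n D v α * (starRingEnd ℂ) (TE n E v α)).re +
        (∑ α, ∑ β, ‖E α β‖ ^ 2) * (∑ γ, ‖v γ‖ ^ 2)) ∧
    (1 ≤ Real.sqrt (∑ γ, ‖v γ‖ ^ 2) →
      ∑ α, ‖TD n D v α + TE n E v α‖ ^ 2 ≤
        ∑ α, ∑ β, ∑ γ, ‖D α β * (starRingEnd ℂ) (v γ) + E α γ * v β‖ ^ 2) ∧
    ((∑ α, ‖TD n D v α‖ ^ 2 ≤
        (∑ α, ∑ β, ‖D α β‖ ^ 2) * (∑ γ, ‖v γ‖ ^ 2)) →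
      (∑ α, ‖TE n E v α‖ ^ 2 ≤
        (∑ α, ∑ β, ‖E α β‖ ^ 2) * (∑ γ, ‖v γ‖ ^ 2)) →
      ∑ α, ‖TD n D v α + TE n E v α‖ ^ 2 ≤
        ∑ α, ∑ β, ∑ γ, ‖D α β * (starRingEnd ℂ) (v γ) + E α γ * v β‖ ^ 2) := by
  have ident : ∑ α, ∑ β, ∑ γ, ‖D α β * (starRingEnd ℂ) (v γ) + E α γ * v β‖ ^ 2 =
      (∑ α, ∑ β, ‖D α β‖ ^ 2) * (∑ γ, ‖v γ‖ ^ 2) +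
        2 * (∑ α, TD n D v α * (starRingEnd ℂ) (TE n E v α)).re +
        (∑ α, ∑ β, ‖E α β‖ ^ 2) * (∑ γ, ‖v γ‖ ^ 2) := by
    rw [Complex.re_sum]
    simp only [key_id, Finset.sum_add_distrib, ← Finset.sum_mul, ← Finset.mul_sum]
  have part3 : (∑ α, ‖TD n D v α‖ ^ 2 ≤
        (∑ α, ∑ β, ‖D α β‖ ^ 2) * (∑ γ, ‖v γ‖ ^ 2)) →
      (∑ α, ‖TE n E v α‖ ^ 2 ≤
        (∑ α, ∑ β, ‖E α β‖ ^ 2) * (∑ γ, ‖v γ‖ ^ 2)) →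
      ∑ α, ‖TD n D v α + TE n E v α‖ ^ 2 ≤
        ∑ α, ∑ β, ∑ γ, ‖D α β * (starRingEnd ℂ) (v γ) + E α γ * v β‖ ^ 2 := by
    intro hD hE
    have expand : ∑ α, ‖TD n D v α + TE n E v α‖ ^ 2 =
        ∑ α, ‖TD n D v α‖ ^ 2 + ∑ α, ‖TE n E v α‖ ^ 2 +
          2 * (∑ α, TD n D v α * (starRingEnd ℂ) (TE n E v α)).re := by
      rw [Complex.re_sum]
      simp only [Complex.sq_norm, Complex.normSq_add, Finset.sum_add_distrib, ← Finset.mul_sum]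
    rw [expand, ident]
    linarith
  refine ⟨ident, fun _ => part3 ?_ ?_, part3⟩
  · calc ∑ α, ‖TD n D v α‖ ^ 2
        ≤ ∑ α, (∑ β, ‖D α β‖ ^ 2) * (∑ β, ‖(starRingEnd ℂ) (v β)‖ ^ 2) :=
          Finset.sum_le_sum fun α _ => cs_row n D _ α
      _ = (∑ α, ∑ β, ‖D α β‖ ^ 2) * (∑ γ, ‖v γ‖ ^ 2) := by
          simp [Complex.norm_conj, ← Finset.sum_mul]
  · calc ∑ α, ‖TE n E v α‖ ^ 2
        ≤ ∑ α, (∑ β, ‖E α β‖ ^ 2) * (∑ β, ‖v β‖ ^ 2) :=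
          Finset.sum_le_sum fun α _ => cs_row n E v α
      _ = (∑ α, ∑ β, ‖E α β‖ ^ 2) * (∑ γ, ‖v γ‖ ^ 2) := by
          rw [← Finset.sum_mul]
end

section
/- Let $n\in\mathbb{N}$ and let $D, E, G \in \mathbb{C}^n$, $m\in[0,1)$, $g\in\mathbb{C}$, $f_0\in\mathbb{R}$ with $0\le|f_0|<|g|$, and let $c_1,\dots,c_6$ be the six coefficients of the extended Jerison–Lee formula (as functions of $m$, $|g|$, $f_0$). Then there exists a constant $C = C(m) > 0$ such that $c_1|G + c_2 D + c_3 E|^2 + c_4|D + c_5 E|^2 + c_6|E|^2 \ge C(|D|^2 + |E|^2 + |G|^2)$. -/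
/-! Using `|f₀| < |g|` and `2 |f₀| √(|g|² - f₀²) ≤ |g|²`, the diagonal coefficients `c₁, c₄, c₆` are
bounded below by positive constants depending only on `m`, and the off-diagonal ones `c₂, c₃, c₅`
by `2 / (1 - m)`. The form is then at least `min (c₁, c₄, c₆) (‖X‖² + ‖Y‖² + ‖E‖²)` with
`X = G + c₂ D + c₃ E` and `Y = D + c₅ E`; this substitution is unitriangular with bounded
coefficients, so `‖D‖² + ‖E‖² + ‖G‖²` is at most a constant times `‖X‖² + ‖Y‖² + ‖E‖²`. -/

/-- The coefficient `c₁` of the extended Jerison--Lee formula (`ag = |g|`). -/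
noncomputable def JLc1 (m ag f0 : ℝ) : ℝ := 3 * (ag ^ 2)⁻¹ * (ag ^ 2 - m * f0 ^ 2)

/-- The coefficient `c₂`. -/
noncomputable def JLc2 (m ag f0 : ℝ) : ℂ :=
  (1 / 3) * (1 - ((2 * m * f0 * Real.sqrt (ag ^ 2 - f0 ^ 2) /
    (ag ^ 2 - m * f0 ^ 2) : ℝ) : ℂ) * Complex.I)

/-- The coefficient `c₃`. -/
noncomputable def JLc3 (m ag f0 : ℝ) : ℂ :=
  -(1 / 3) * (1 + ((2 * m * f0 * Real.sqrt (ag ^ 2 - f0 ^ 2) /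
    (ag ^ 2 - m * f0 ^ 2) : ℝ) : ℂ) * Complex.I)

/-- The coefficient `c₄`. -/
noncomputable def JLc4 (m ag f0 : ℝ) : ℝ :=
  (1 / 3) * (5 - 3 * m + 4 * m * (1 - m) * f0 ^ 2 / (ag ^ 2 - m * f0 ^ 2))

/-- The coefficient `c₅`. -/
noncomputable def JLc5 (m ag f0 : ℝ) : ℂ :=
  ((((4 - 3 * m) * ag ^ 2 - m * (2 + m) * f0 ^ 2 + 2 * m ^ 2 * (ag ^ 2)⁻¹ * f0 ^ 4) /
      ((5 - 3 * m) * ag ^ 2 - m * (1 + m) * f0 ^ 2) : ℝ) : ℂ) +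
    (((2 * m * f0 * Real.sqrt (ag ^ 2 - f0 ^ 2) * (ag ^ 2 - m * f0 ^ 2)) /
      (ag ^ 2 * ((5 - 3 * m) * ag ^ 2 - m * (1 + m) * f0 ^ 2)) : ℝ) : ℂ) * Complex.I

/-- The coefficient `c₆`. -/
noncomputable def JLc6 (m ag f0 : ℝ) : ℝ :=
  ((3 - 2 * m) * ag ^ 2 + m * (5 - 6 * m) * f0 ^ 2) /
    ((5 - 3 * m) * ag ^ 2 - m * (1 + m) * f0 ^ 2)

open Complex

lemma sq_add_sq_add_sq_le_of_triangular {b x y z d g : ℝ} (hd0 : 0 ≤ d)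
    (hg0 : 0 ≤ g) (hd : d ≤ y + b * z) (hg : g ≤ x + b * d + b * z) :
    d ^ 2 + z ^ 2 + g ^ 2 ≤ (6 * b ^ 4 + 6 * b ^ 2 + 3) * (x ^ 2 + y ^ 2 + z ^ 2) := by
  have hd2 : d ^ 2 ≤ 2 * y ^ 2 + 2 * b ^ 2 * z ^ 2 := by
    nlinarith [sq_nonneg (y - b * z)]
  have hg2 : g ^ 2 ≤ 3 * x ^ 2 + 3 * b ^ 2 * d ^ 2 + 3 * b ^ 2 * z ^ 2 := by
    nlinarith [sq_nonneg (x - b * d), sq_nonneg (x - b * z), sq_nonneg (b * d - b * z)]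
  nlinarith [mul_le_mul_of_nonneg_left hd2 (by positivity : (0 : ℝ) ≤ 1 + 3 * b ^ 2),
    mul_nonneg (by positivity : (0 : ℝ) ≤ 6 * b ^ 4 + 6 * b ^ 2) (sq_nonneg x),
    mul_nonneg (by positivity : (0 : ℝ) ≤ 6 * b ^ 4 + 1) (sq_nonneg y),
    mul_nonneg (by positivity : (0 : ℝ) ≤ b ^ 2 + 2) (sq_nonneg z)]

section Triangular

variable {𝕜 V : Type*} [NormedField 𝕜] [SeminormedAddCommGroup V] [NormedSpace 𝕜 V]

lemma norm_le_of_add_smul {b : ℝ} {c : 𝕜} (hc : ‖c‖ ≤ b) (D E : V) :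
    ‖D‖ ≤ ‖D + c • E‖ + b * ‖E‖ :=
  calc ‖D‖ = ‖(D + c • E) - c • E‖ := by rw [add_sub_cancel_right]
    _ ≤ ‖D + c • E‖ + ‖c‖ * ‖E‖ := (norm_sub_le _ _).trans_eq (by rw [norm_smul])
    _ ≤ ‖D + c • E‖ + b * ‖E‖ := by gcongr

lemma norm_le_of_add_smul_add_smul {b : ℝ} {c c' : 𝕜} (hc : ‖c‖ ≤ b) (hc' : ‖c'‖ ≤ b)
    (G D E : V) : ‖G‖ ≤ ‖G + c • D + c' • E‖ + b * ‖D‖ + b * ‖E‖ :=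
  calc ‖G‖ = ‖(G + c • D + c' • E) - c • D - c' • E‖ := by abel_nf
    _ ≤ ‖G + c • D + c' • E‖ + ‖c‖ * ‖D‖ + ‖c'‖ * ‖E‖ := by
      rw [← norm_smul, ← norm_smul]
      exact (norm_sub_le _ _).trans (add_le_add_left (norm_sub_le _ _) _)
    _ ≤ ‖G + c • D + c' • E‖ + b * ‖D‖ + b * ‖E‖ := by gcongr

theorem coercive_of_triangular {α b c₁ c₄ c₆ : ℝ} {c₂ c₃ c₅ : 𝕜} (hα : 0 ≤ α)
    (h₁ : α ≤ c₁) (h₄ : α ≤ c₄) (h₆ : α ≤ c₆) (h₂ : ‖c₂‖ ≤ b) (h₃ : ‖c₃‖ ≤ b) (h₅ : ‖c₅‖ ≤ b)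
    (D E G : V) :
    α / (6 * b ^ 4 + 6 * b ^ 2 + 3) * (‖D‖ ^ 2 + ‖E‖ ^ 2 + ‖G‖ ^ 2) ≤
      c₁ * ‖G + c₂ • D + c₃ • E‖ ^ 2 + c₄ * ‖D + c₅ • E‖ ^ 2 + c₆ * ‖E‖ ^ 2 := by
  set X := G + c₂ • D + c₃ • E
  set Y := D + c₅ • E
  have hK : 0 < 6 * b ^ 4 + 6 * b ^ 2 + 3 := by positivity
  have key := sq_add_sq_add_sq_le_of_triangular (norm_nonneg D) (norm_nonneg G)
    (norm_le_of_add_smul h₅ D E) (norm_le_of_add_smul_add_smul h₂ h₃ G D E)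
  calc α / (6 * b ^ 4 + 6 * b ^ 2 + 3) * (‖D‖ ^ 2 + ‖E‖ ^ 2 + ‖G‖ ^ 2)
      ≤ α * (‖X‖ ^ 2 + ‖Y‖ ^ 2 + ‖E‖ ^ 2) := by
        rw [div_mul_eq_mul_div, div_le_iff₀ hK, mul_assoc]
        gcongr
        linarith
    _ ≤ c₁ * ‖X‖ ^ 2 + c₄ * ‖Y‖ ^ 2 + c₆ * ‖E‖ ^ 2 := by
        rw [mul_add, mul_add]
        gcongr

end Triangular

lemma two_mul_abs_mul_sqrt_sub_sq_le (f a : ℝ) : 2 * |f| * √(a ^ 2 - f ^ 2) ≤ a ^ 2 := by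
  rcases le_total (a ^ 2 - f ^ 2) 0 with h | h
  · rw [Real.sqrt_eq_zero'.mpr h, mul_zero]; positivity
  · nlinarith [sq_nonneg (|f| - √(a ^ 2 - f ^ 2)), Real.sq_sqrt h, sq_abs f]

lemma norm_add_ofReal_mul_I_le (z : ℂ) (t : ℝ) : ‖z + t * I‖ ≤ ‖z‖ + |t| := by
  simpa using norm_add_le z (t * I)

lemma norm_sub_ofReal_mul_I_le (z : ℂ) (t : ℝ) : ‖z - t * I‖ ≤ ‖z‖ + |t| := by
  simpa using norm_sub_le z (t * I)

section Coefficients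

variable {m a f0 : ℝ}

lemma one_sub_mul_sq_le (hm0 : 0 ≤ m) (hfa : |f0| < a) :
    (1 - m) * a ^ 2 ≤ a ^ 2 - m * f0 ^ 2 := by
  nlinarith [sq_lt_sq.mpr (hfa.trans_le (le_abs_self a))]

lemma five_mul_one_sub_mul_sq_le (hm0 : 0 ≤ m) (hm1 : m < 1) (hfa : |f0| < a) :
    5 * (1 - m) * a ^ 2 ≤ (5 - 3 * m) * a ^ 2 - m * (1 + m) * f0 ^ 2 := by
  nlinarith [mul_le_mul_of_nonneg_left (sq_lt_sq.mpr (hfa.trans_le (le_abs_self a))).le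
    (by positivity : 0 ≤ m * (1 + m)),
    mul_nonneg (mul_nonneg hm0 (sub_nonneg.mpr hm1.le)) (sq_nonneg a)]

lemma le_JLc1 (hm0 : 0 ≤ m) (hfa : |f0| < a) : 3 * (1 - m) ≤ JLc1 m a f0 := by
  have ha : 0 < a ^ 2 := by have := (abs_nonneg f0).trans_lt hfa; positivity
  rw [JLc1, mul_assoc, ← div_eq_inv_mul]
  gcongr
  rw [le_div_iff₀ ha]
  exact one_sub_mul_sq_le hm0 hfa

lemma sub_mul_sq_pos (hm0 : 0 ≤ m) (hm1 : m < 1) (hfa : |f0| < a) : 0 < a ^ 2 - m * f0 ^ 2 := by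
  have ha : 0 < a := (abs_nonneg f0).trans_lt hfa
  have : 0 < (1 - m) * a ^ 2 := mul_pos (by linarith) (by positivity)
  linarith [one_sub_mul_sq_le hm0 hfa]

lemma le_JLc4 (hm0 : 0 ≤ m) (hm1 : m < 1) (hfa : |f0| < a) : (5 - 3 * m) / 3 ≤ JLc4 m a f0 := by
  have : 0 ≤ 4 * m * (1 - m) * f0 ^ 2 / (a ^ 2 - m * f0 ^ 2) := by
    have := sub_mul_sq_pos hm0 hm1 hfa
    have : 0 ≤ 1 - m := by linarith
    positivity
  rw [JLc4]
  linarith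

lemma le_JLc6 (hm0 : 0 ≤ m) (hm1 : m < 1) (hfa : |f0| < a) :
    (3 - 2 * m) / (5 - 3 * m) ≤ JLc6 m a f0 := by
  have ha : 0 < a := (abs_nonneg f0).trans_lt hfa
  have hden : 0 < (5 - 3 * m) * a ^ 2 - m * (1 + m) * f0 ^ 2 := by
    have : 0 < 5 * (1 - m) * a ^ 2 := mul_pos (by linarith) (by positivity)
    linarith [five_mul_one_sub_mul_sq_le hm0 hm1 hfa]
  rw [JLc6, div_le_div_iff₀ (by linarith) hden]
  -- the cross-multiplied difference is `4 m (1 - m) (7 - 4 m) f0²`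
  nlinarith [mul_nonneg (mul_nonneg (mul_nonneg hm0 (sub_nonneg.mpr hm1.le))
    (by linarith : (0 : ℝ) ≤ 7 - 4 * m)) (sq_nonneg f0)]

lemma abs_two_mul_mul_sqrt_le (hm0 : 0 ≤ m) (f a : ℝ) :
    |2 * m * f * √(a ^ 2 - f ^ 2)| ≤ m * a ^ 2 := by
  rw [show 2 * m * f * √(a ^ 2 - f ^ 2) = m * (2 * f * √(a ^ 2 - f ^ 2)) by ring, abs_mul,
    abs_of_nonneg hm0, abs_mul, abs_mul, abs_two, abs_of_nonneg (Real.sqrt_nonneg _)]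
  exact mul_le_mul_of_nonneg_left (two_mul_abs_mul_sqrt_sub_sq_le f a) hm0

-- `3 |Im c₂| = 3 |Im c₃|`
lemma abs_JLc2_im_le (hm0 : 0 ≤ m) (hm1 : m < 1) (hfa : |f0| < a) :
    |2 * m * f0 * √(a ^ 2 - f0 ^ 2) / (a ^ 2 - m * f0 ^ 2)| ≤ 1 / (1 - m) := by
  have hden := sub_mul_sq_pos hm0 hm1 hfa
  rw [abs_div, abs_of_pos hden, div_le_div_iff₀ hden (by linarith)]
  nlinarith [mul_le_mul_of_nonneg_right (abs_two_mul_mul_sqrt_le hm0 f0 a)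
    (sub_nonneg.mpr hm1.le), one_sub_mul_sq_le hm0 hfa]

lemma norm_JLc2_le (hm0 : 0 ≤ m) (hm1 : m < 1) (hfa : |f0| < a) :
    ‖JLc2 m a f0‖ ≤ 2 / (1 - m) := by
  have ht := abs_JLc2_im_le hm0 hm1 hfa
  have : 1 ≤ 1 / (1 - m) := by rw [le_div_iff₀ (by linarith)]; linarith
  calc ‖JLc2 m a f0‖ ≤ 1 / 3 * (1 + 1 / (1 - m)) := by
        rw [JLc2, norm_mul]
        gcongr
        · norm_num
        · exact (norm_sub_ofReal_mul_I_le 1 _).trans (by rw [norm_one]; gcongr)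
    _ ≤ 2 / (1 - m) := by rw [div_eq_mul_one_div 2]; linarith

lemma norm_JLc3_le (hm0 : 0 ≤ m) (hm1 : m < 1) (hfa : |f0| < a) :
    ‖JLc3 m a f0‖ ≤ 2 / (1 - m) := by
  have ht := abs_JLc2_im_le hm0 hm1 hfa
  have : 1 ≤ 1 / (1 - m) := by rw [le_div_iff₀ (by linarith)]; linarith
  calc ‖JLc3 m a f0‖ ≤ 1 / 3 * (1 + 1 / (1 - m)) := by
        rw [JLc3, norm_mul, norm_neg]
        gcongr
        · norm_num
        · exact (norm_add_ofReal_mul_I_le 1 _).trans (by rw [norm_one]; gcongr)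
    _ ≤ 2 / (1 - m) := by rw [div_eq_mul_one_div 2]; linarith

lemma abs_JLc5_re_le (hm0 : 0 ≤ m) (hm1 : m < 1) (hfa : |f0| < a) :
    |((4 - 3 * m) * a ^ 2 - m * (2 + m) * f0 ^ 2 + 2 * m ^ 2 * (a ^ 2)⁻¹ * f0 ^ 4) /
      ((5 - 3 * m) * a ^ 2 - m * (1 + m) * f0 ^ 2)| ≤ 6 / (5 * (1 - m)) := by
  have ha : 0 < a ^ 2 := by have := (abs_nonneg f0).trans_lt hfa; positivity
  have hf := sq_lt_sq.mpr (hfa.trans_le (le_abs_self a))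
  have h5 := five_mul_one_sub_mul_sq_le hm0 hm1 hfa
  have hden : 0 < 5 * (1 - m) * a ^ 2 := mul_pos (by linarith) ha
  have hq0 : 0 ≤ (a ^ 2)⁻¹ * f0 ^ 4 := by positivity
  have hq : (a ^ 2)⁻¹ * f0 ^ 4 ≤ a ^ 2 := by
    rw [inv_mul_le_iff₀ ha]
    nlinarith
  have hnum : |(4 - 3 * m) * a ^ 2 - m * (2 + m) * f0 ^ 2 + 2 * m ^ 2 * (a ^ 2)⁻¹ * f0 ^ 4|
      ≤ 6 * a ^ 2 := by
    rw [abs_le]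
    constructor
    · nlinarith [mul_nonneg (mul_nonneg hm0 hm0) hq0]
    · nlinarith [mul_le_mul_of_nonneg_left hq (mul_nonneg hm0 hm0)]
  rw [abs_div, abs_of_pos (hden.trans_le h5)]
  calc _ ≤ 6 * a ^ 2 / (5 * (1 - m) * a ^ 2) := div_le_div₀ (by positivity) hnum hden h5
    _ = 6 / (5 * (1 - m)) := mul_div_mul_right _ _ ha.ne'

lemma abs_JLc5_im_le (hm0 : 0 ≤ m) (hm1 : m < 1) (hfa : |f0| < a) :
    |2 * m * f0 * √(a ^ 2 - f0 ^ 2) * (a ^ 2 - m * f0 ^ 2) /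
      (a ^ 2 * ((5 - 3 * m) * a ^ 2 - m * (1 + m) * f0 ^ 2))| ≤ 1 / (5 * (1 - m)) := by
  have ha : 0 < a ^ 2 := by have := (abs_nonneg f0).trans_lt hfa; positivity
  have h5 := five_mul_one_sub_mul_sq_le hm0 hm1 hfa
  have hm : 0 < 5 * (1 - m) := by linarith
  have hden : 0 < 5 * (1 - m) * a ^ 2 := mul_pos hm ha
  have hd := sub_mul_sq_pos hm0 hm1 hfa
  have hnum : |2 * m * f0 * √(a ^ 2 - f0 ^ 2) * (a ^ 2 - m * f0 ^ 2)| ≤ a ^ 2 * a ^ 2 := by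
    rw [abs_mul, abs_of_pos hd]
    have := abs_two_mul_mul_sqrt_le hm0 f0 a
    nlinarith [mul_nonneg hm0 (sq_nonneg f0)]
  rw [abs_div, abs_of_pos (mul_pos ha (hden.trans_le h5))]
  calc _ ≤ a ^ 2 * a ^ 2 / (a ^ 2 * (5 * (1 - m) * a ^ 2)) :=
        div_le_div₀ (by positivity) hnum (by positivity) (by gcongr)
    _ = 1 / (5 * (1 - m)) := by
        rw [div_eq_div_iff (by positivity) hm.ne']
        ring

lemma norm_JLc5_le (hm0 : 0 ≤ m) (hm1 : m < 1) (hfa : |f0| < a) :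
    ‖JLc5 m a f0‖ ≤ 2 / (1 - m) := by
  have hre := abs_JLc5_re_le hm0 hm1 hfa
  have him := abs_JLc5_im_le hm0 hm1 hfa
  calc ‖JLc5 m a f0‖ ≤ 6 / (5 * (1 - m)) + 1 / (5 * (1 - m)) := by
        rw [JLc5]
        refine (norm_add_ofReal_mul_I_le _ _).trans ?_
        rw [Complex.norm_real, Real.norm_eq_abs]
        gcongr
    _ ≤ 2 / (1 - m) := by
        rw [← add_div, div_le_div_iff₀ (by linarith) (by linarith)]
        nlinarith

end Coefficients

/-- coercivity of the quadratic form built from the six coefficients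
of the extended Jerison--Lee formula (display (2.8) in Flynn–Vétois). -/
theorem stmt6 (m : ℝ) (hm0 : 0 ≤ m) (hm1 : m < 1) :
    ∃ C : ℝ, 0 < C ∧ ∀ (n : ℕ) (D E G : EuclideanSpace ℂ (Fin n)) (g : ℂ) (f0 : ℝ),
      |f0| < ‖g‖ →
      C * (‖D‖ ^ 2 + ‖E‖ ^ 2 + ‖G‖ ^ 2) ≤
        JLc1 m (‖g‖) f0 *
            ‖G + JLc2 m (‖g‖) f0 • D + JLc3 m (‖g‖) f0 • E‖ ^ 2 +
          JLc4 m (‖g‖) f0 * ‖D + JLc5 m (‖g‖) f0 • E‖ ^ 2 +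
          JLc6 m (‖g‖) f0 * ‖E‖ ^ 2 := by
  set α := min (3 * (1 - m)) (min ((5 - 3 * m) / 3) ((3 - 2 * m) / (5 - 3 * m)))
  have hα : 0 < α :=
    lt_min (by linarith) (lt_min (by linarith) (div_pos (by linarith) (by linarith)))
  refine ⟨α / (6 * (2 / (1 - m)) ^ 4 + 6 * (2 / (1 - m)) ^ 2 + 3), by positivity, ?_⟩
  intro n D E G g f0 hfa
  exact coercive_of_triangular hα.le ((min_le_left _ _).trans (le_JLc1 hm0 hfa))
    ((min_le_right _ _).trans ((min_le_left _ _).trans (le_JLc4 hm0 hm1 hfa)))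
    ((min_le_right _ _).trans ((min_le_right _ _).trans (le_JLc6 hm0 hm1 hfa)))
    (norm_JLc2_le hm0 hm1 hfa) (norm_JLc3_le hm0 hm1 hfa) (norm_JLc5_le hm0 hm1 hfa) D E G
end
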